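/- Fix an integer β > 2 and a graph process starting from the empty graph H on n vertices, where each step is either (a) deleting an edge (u,v) of H with deg_H(u) + deg_H(v) > β, or (b) inserting a non-edge (u,v) with deg_H(u) + deg_H(v) < β - 1. Then any such sequence of moves has length at most nβ². -/

import Mathlib

/-!
Twice the paper's potential `Φ` is `∑_v ((2β - 1) d_v - 2 d_v²)`, because
`∑_{uv ∈ E} (d_u + d_v) = ∑_v d_v²`; each term is at most `2β²`. A move changes only the degrees
of its two endpoints, each by one: inserting `uv` raises the potential by
`4β - 6 - 4 (d_u + d_v) ≥ 2` since `d_u + d_v ≤ β - 2`, and deleting `uv` raises it by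
`4 (d_u + d_v) - 4β - 2 ≥ 2` since `d_u + d_v ≥ β + 1`. Starting from `0` at the empty graph,
after `L` moves `2L ≤ 2nβ²`.
-/

open SimpleGraph

/-- The degree of a vertex. -/
noncomputable def deg {V : Type*} (H : SimpleGraph V) (v : V) : ℕ :=
  (H.neighborSet v).ncard

/-- A legal move of the process: either delete an edge `(u,v)` of `H` with
`deg_H(u) + deg_H(v) > β`, or insert a non-edge `(u,v)` with `deg_H(u) + deg_H(v) < β - 1`. -/
def Move {V : Type*} (β : ℕ) (H H' : SimpleGraph V) : Prop :=
  (∃ u v, H.Adj u v ∧ β < deg H u + deg H v ∧ H' = H.deleteEdges {s(u, v)}) ∨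
  (∃ u v, u ≠ v ∧ ¬ H.Adj u v ∧ deg H u + deg H v < β - 1 ∧
    H' = H ⊔ SimpleGraph.fromEdgeSet {s(u, v)})

section Degrees

variable {V : Type*} {H : SimpleGraph V} {u v w : V}

lemma neighborSet_sup_edge_left (huv : u ≠ v) :
    (H ⊔ edge u v).neighborSet u = insert v (H.neighborSet u) := by
  ext w
  simp only [mem_neighborSet, sup_adj, edge_adj, Set.mem_insert_iff]
  grind

lemma neighborSet_deleteEdges_left :
    (H.deleteEdges {s(u, v)}).neighborSet u = H.neighborSet u \ {v} := by
  ext w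
  simp only [mem_neighborSet, deleteEdges_adj, Set.mem_singleton_iff, Sym2.eq_iff, Set.mem_sdiff]
  grind [H.loopless.irrefl]

lemma deg_sup_edge_of_ne (hu : w ≠ u) (hv : w ≠ v) : deg (H ⊔ edge u v) w = deg H w := by
  unfold deg
  congr 1
  ext x
  simp [edge_adj, hu, hv]

lemma deg_deleteEdges_of_ne (hu : w ≠ u) (hv : w ≠ v) :
    deg (H.deleteEdges {s(u, v)}) w = deg H w := by
  unfold deg
  congr 1
  ext x
  simp [hu, hv]

lemma deg_sup_edge_left [Finite V] (huv : u ≠ v) (hn : ¬H.Adj u v) :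
    deg (H ⊔ edge u v) u = deg H u + 1 := by
  rw [deg, neighborSet_sup_edge_left huv]
  exact Set.ncard_insert_of_notMem hn

lemma deg_deleteEdges_left [Finite V] (h : H.Adj u v) :
    deg (H.deleteEdges {s(u, v)}) u + 1 = deg H u := by
  rw [deg, neighborSet_deleteEdges_left]
  exact Set.ncard_sdiff_singleton_add_one h

end Degrees

section Potential

variable {V : Type*} [Fintype V] {H H' : SimpleGraph V} {u v : V} {β : ℕ}

lemma sum_deg_sub_sum_deg (f : ℕ → ℤ) (huv : u ≠ v)
    (hdeg : ∀ w, w ≠ u → w ≠ v → deg H' w = deg H w) :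
    ∑ w, f (deg H' w) - ∑ w, f (deg H w) =
      (f (deg H' u) - f (deg H u)) + (f (deg H' v) - f (deg H v)) := by
  classical
  rw [← Finset.sum_sub_distrib, ← Finset.sum_subset (Finset.subset_univ {u, v}),
    Finset.sum_pair huv]
  intro w _ hw
  simp only [Finset.mem_insert, Finset.mem_singleton, not_or] at hw
  rw [hdeg w hw.1 hw.2, sub_self]

def potentialTerm (β d : ℕ) : ℤ :=
  (2 * β - 1) * d - 2 * d ^ 2

noncomputable def potential (β : ℕ) (H : SimpleGraph V) : ℤ :=
  ∑ w, potentialTerm β (deg H w)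

lemma potential_bot (β : ℕ) : potential β (⊥ : SimpleGraph V) = 0 := by
  simp [potential, potentialTerm, deg]

lemma potential_le (β : ℕ) (H : SimpleGraph V) :
    potential β H ≤ 2 * Fintype.card V * β ^ 2 := by
  have hterm (d : ℕ) : potentialTerm β d ≤ 2 * (β : ℤ) ^ 2 := by
    unfold potentialTerm
    nlinarith [sq_nonneg ((d : ℤ) - β), Int.natCast_nonneg d]
  calc potential β H ≤ ∑ _w : V, 2 * (β : ℤ) ^ 2 := Finset.sum_le_sum fun _ _ ↦ hterm _
    _ = 2 * Fintype.card V * β ^ 2 := by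
        rw [Finset.sum_const, Finset.card_univ, nsmul_eq_mul]; ring

lemma potential_add_two_le_sup_edge (huv : u ≠ v) (hn : ¬H.Adj u v)
    (hdeg : deg H u + deg H v < β - 1) :
    potential β H + 2 ≤ potential β (H ⊔ edge u v) := by
  have hu := deg_sup_edge_left huv hn
  have hv : deg (H ⊔ edge u v) v = deg H v + 1 := by
    rw [edge_comm]; exact deg_sup_edge_left huv.symm fun h ↦ hn h.symm
  have hdiff : potential β (H ⊔ edge u v) - potential β H = _ :=
    sum_deg_sub_sum_deg (potentialTerm β) huv fun _ ↦ deg_sup_edge_of_ne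
  have hsum : (deg H u : ℤ) + deg H v + 2 ≤ β := by omega
  rw [hu, hv] at hdiff
  simp only [potentialTerm] at hdiff
  push_cast at hdiff
  linarith

lemma potential_add_two_le_deleteEdges (h : H.Adj u v) (hdeg : β < deg H u + deg H v) :
    potential β H + 2 ≤ potential β (H.deleteEdges {s(u, v)}) := by
  have hu := deg_deleteEdges_left h
  have hv : deg (H.deleteEdges {s(u, v)}) v + 1 = deg H v := by
    rw [Sym2.eq_swap]; exact deg_deleteEdges_left h.symm
  have hdiff : potential β (H.deleteEdges {s(u, v)}) - potential β H = _ :=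
    sum_deg_sub_sum_deg (potentialTerm β) h.ne fun _ ↦ deg_deleteEdges_of_ne
  set H' := H.deleteEdges {s(u, v)}
  have hsum : (β : ℤ) ≤ deg H' u + deg H' v + 1 := by omega
  rw [← hu, ← hv] at hdiff
  simp only [potentialTerm] at hdiff
  push_cast at hdiff
  linarith

lemma Move.potential_add_two_le (h : Move β H H') : potential β H + 2 ≤ potential β H' := by
  rcases h with ⟨u, v, hadj, hdeg, rfl⟩ | ⟨u, v, huv, hn, hdeg, rfl⟩
  · exact potential_add_two_le_deleteEdges hadj hdeg
  · exact potential_add_two_le_sup_edge huv hn hdeg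

end Potential

theorem stmt4_general {V : Type*} [Fintype V] (β : ℕ) (L : ℕ)
    (Hs : ℕ → SimpleGraph V) (h0 : Hs 0 = ⊥)
    (hmove : ∀ i < L, Move β (Hs i) (Hs (i + 1))) :
    L ≤ Fintype.card V * β ^ 2 := by
  have hgrowth : ∀ i ≤ L, 2 * (i : ℤ) ≤ potential β (Hs i) := by
    intro i hi
    induction i with
    | zero => simp [h0, potential_bot]
    | succ i ih =>
      have hstep := (hmove i hi).potential_add_two_le
      push_cast
      linarith [ih (by omega)]
  have hbound := (hgrowth L le_rfl).trans (potential_le β (Hs L))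
  have hL : (L : ℤ) ≤ Fintype.card V * β ^ 2 := by linarith
  exact_mod_cast hL

/-- starting from the empty graph on `n` vertices, any sequence of legal
moves has length at most `n β²`. -/
theorem stmt4 {V : Type*} [Fintype V] (β : ℕ) (hβ : 2 < β) (L : ℕ)
    (Hs : ℕ → SimpleGraph V) (h0 : Hs 0 = ⊥)
    (hmove : ∀ i < L, Move β (Hs i) (Hs (i + 1))) :
    L ≤ Fintype.card V * β ^ 2 :=
  stmt4_general β L Hs h0 hmove
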